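/- Let k > 0, let X̂ be a p × n real matrix, and let A be a p × m real matrix whose columns are linearly independent (A has full column rank m). Then the Huber fitting objective F(S) = Σ_{i,j} H_k((X̂ − A·S)_{i,j}) on m × n real matrices is coercive: F(S) → ∞ as the (Frobenius) norm of S tends to infinity; consequently a minimizer of F over the set of entrywise-nonnegative matrices S exists. -/

import Mathlib

/-!
Since `H_k(x) ≥ k|x| - k²/2`, the loss `R ↦ Σᵢⱼ H_k(Rᵢⱼ)` grows at least like `k‖R‖`, so it tends
to infinity along the cocompact filter. Full column rank makes `S ↦ X̂ - A S` an injective affine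
map between finite-dimensional spaces, hence a closed embedding, so `F` tends to infinity along the
cocompact filter too. For continuous `g`, in particular the Frobenius norm, `comap g atTop` is
finer than the cocompact filter; and a continuous function tending to infinity along it attains
its minimum on the closed nonempty cone of nonnegative matrices.
-/

open Filter Topology

noncomputable def huber (k x : ℝ) : ℝ :=
  if |x| ≤ k then x ^ 2 / 2 else k * |x| - k ^ 2 / 2

theorem continuous_huber (k : ℝ) : Continuous (huber k) := by
  refine Continuous.if_le (by fun_prop) (by fun_prop) continuous_abs continuous_const fun x hx => ?_
  rw [← sq_abs, hx]
  ring

theorem mul_abs_sub_le_huber (k x : ℝ) : k * |x| - k ^ 2 / 2 ≤ huber k x := by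
  unfold huber
  split_ifs
  · nlinarith [sq_nonneg (|x| - k), sq_abs x]
  · rfl

theorem huber_nonneg {k : ℝ} (hk : 0 ≤ k) (x : ℝ) : 0 ≤ huber k x := by
  unfold huber
  split_ifs with h
  · positivity
  · nlinarith [not_le.mp h]

section HuberLoss

variable {ι κ : Type*} [Fintype ι] [Fintype κ]

noncomputable def huberLoss (k : ℝ) (R : Matrix ι κ ℝ) : ℝ :=
  ∑ i, ∑ j, huber k (R i j)

theorem continuous_huberLoss (k : ℝ) : Continuous (huberLoss k : Matrix ι κ ℝ → ℝ) := by
  have := continuous_huber k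
  unfold huberLoss
  fun_prop

theorem huberLoss_nonneg {k : ℝ} (hk : 0 ≤ k) (R : Matrix ι κ ℝ) : 0 ≤ huberLoss k R :=
  Finset.sum_nonneg fun _ _ => Finset.sum_nonneg fun _ _ => huber_nonneg hk _

theorem huber_le_huberLoss {k : ℝ} (hk : 0 ≤ k) (R : Matrix ι κ ℝ) (i : ι) (j : κ) :
    huber k (R i j) ≤ huberLoss k R :=
  calc huber k (R i j) ≤ ∑ j', huber k (R i j') :=
        Finset.single_le_sum (fun j' _ => huber_nonneg hk (R i j')) (Finset.mem_univ j)
    _ ≤ huberLoss k R :=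
        Finset.single_le_sum (f := fun i' => ∑ j', huber k (R i' j'))
          (fun i' _ => Finset.sum_nonneg fun j' _ => huber_nonneg hk (R i' j')) (Finset.mem_univ i)

attribute [local instance] Matrix.normedAddCommGroup Matrix.normedSpace

theorem mul_norm_le_huberLoss {k : ℝ} (hk : 0 ≤ k) (R : Matrix ι κ ℝ) :
    k * ‖R‖ ≤ huberLoss k R + k ^ 2 / 2 := by
  have hbound : 0 ≤ huberLoss k R + k ^ 2 / 2 := by
    have := huberLoss_nonneg hk R
    positivity
  calc k * ‖R‖ = ‖k • R‖ := by rw [norm_smul, Real.norm_of_nonneg hk]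
    _ ≤ huberLoss k R + k ^ 2 / 2 := (Matrix.norm_le_iff hbound).mpr fun i j => ?_
  rw [Matrix.smul_apply, norm_smul, Real.norm_of_nonneg hk, Real.norm_eq_abs]
  linarith [mul_abs_sub_le_huber k (R i j), huber_le_huberLoss hk R i j]

theorem tendsto_huberLoss_cocompact {k : ℝ} (hk : 0 < k) :
    Tendsto (huberLoss k : Matrix ι κ ℝ → ℝ) (cocompact _) atTop := by
  refine tendsto_atTop_mono (fun R => ?_)
    ((tendsto_norm_cocompact_atTop.const_mul_atTop hk).atTop_add
      (tendsto_const_nhds (x := -(k ^ 2 / 2))))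
  linarith [mul_norm_le_huberLoss hk.le R]

end HuberLoss

theorem comap_atTop_le_cocompact {X : Type*} [TopologicalSpace X] {g : X → ℝ}
    (hg : Continuous g) : comap g atTop ≤ cocompact X :=
  (comap_mono atTop_le_cocompact).trans (comap_cocompact_le hg)

namespace Matrix

variable {l m n : Type*}

theorem isClosed_setOf_forall_nonneg : IsClosed {S : Matrix m n ℝ | ∀ i j, 0 ≤ S i j} := by
  simp only [Set.ofPred_forall]
  exact isClosed_iInter fun i => isClosed_iInter fun j => isClosed_le continuous_const (by fun_prop)

theorem isClosedEmbedding_sub_mul [Fintype m] [Fintype n] (X : Matrix l n ℝ) {A : Matrix l m ℝ}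
    (hA : LinearIndependent ℝ A.col) :
    IsClosedEmbedding fun S : Matrix m n ℝ => X - A * S := by
  have hinj : Function.Injective (mulLeftLinearMap n ℝ A) := fun B C hBC =>
    ext_col fun j => mulVec_injective_iff.mpr hA (funext fun i => congrFun₂ hBC i j)
  exact (Homeomorph.subLeft X).isClosedEmbedding.comp
    ((mulLeftLinearMap n ℝ A).isClosedEmbedding_of_injective (LinearMap.ker_eq_bot.mpr hinj))

end Matrix

theorem tendsto_huberLoss_sub_mul_cocompact {l m n : Type*} [Fintype l] [Fintype m] [Fintype n]
    {k : ℝ} (hk : 0 < k) (X : Matrix l n ℝ) {A : Matrix l m ℝ} (hA : LinearIndependent ℝ A.col) :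
    Tendsto (fun S => huberLoss k (X - A * S)) (cocompact (Matrix m n ℝ)) atTop :=
  (tendsto_huberLoss_cocompact hk).comp (Matrix.isClosedEmbedding_sub_mul X hA).tendsto_cocompact

/-- If the columns of `A` are linearly independent (full column rank), the Huber
fitting objective `F(S) = Σᵢⱼ H_k((X̂ − A·S)ᵢⱼ)` is coercive (`F(S) → ∞` as the
Frobenius norm of `S` tends to infinity), and consequently a minimizer of `F` over
the entrywise-nonnegative matrices exists. -/
theorem huber_fitting_coercive_and_min_exists (k : ℝ) (hk : 0 < k) (p n m : ℕ)
    (X : Matrix (Fin p) (Fin n) ℝ) (A : Matrix (Fin p) (Fin m) ℝ)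
    (hA : LinearIndependent ℝ (fun j : Fin m => fun i : Fin p => A i j)) :
    Filter.Tendsto
      (fun S : Matrix (Fin m) (Fin n) ℝ => ∑ i : Fin p, ∑ j : Fin n, huber k ((X - A * S) i j))
      (Filter.comap
        (fun S : Matrix (Fin m) (Fin n) ℝ => Real.sqrt (∑ i : Fin m, ∑ j : Fin n, (S i j) ^ 2))
        Filter.atTop)
      Filter.atTop ∧
    ∃ S₀ : Matrix (Fin m) (Fin n) ℝ, (∀ i j, 0 ≤ S₀ i j) ∧
      ∀ S : Matrix (Fin m) (Fin n) ℝ, (∀ i j, 0 ≤ S i j) →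
        ∑ i : Fin p, ∑ j : Fin n, huber k ((X - A * S₀) i j) ≤
          ∑ i : Fin p, ∑ j : Fin n, huber k ((X - A * S) i j) := by
  have hcoercive := tendsto_huberLoss_sub_mul_cocompact hk X hA (n := Fin n)
  refine ⟨hcoercive.mono_left (comap_atTop_le_cocompact (by fun_prop)), ?_⟩
  have hcont : Continuous fun S : Matrix (Fin m) (Fin n) ℝ => huberLoss k (X - A * S) :=
    (continuous_huberLoss k).comp (by fun_prop)
  obtain ⟨S₀, hS₀, hmin⟩ := hcont.continuousOn.exists_isMinOn' Matrix.isClosed_setOf_forall_nonneg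
    (fun _ _ => le_rfl) ((hcoercive.eventually_ge_atTop _).filter_mono inf_le_left)
  exact ⟨S₀, hS₀, fun S hS => hmin hS⟩
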